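/- With φ^Lin_v as above and Φ^Lin(X) = Π_{0≠v∈{0,1}^ℓ} φ^Lin_v(X): if X ≠ 0 and every nonzero vector y in the F_2-row span of X has Hamming weight ≥ d, then Φ^Lin(X) ≤ 0; moreover Φ^Lin(0) > 0. -/

import Mathlib

open Finset

/-- Hamming weight of a vector in `{0,1}^n`. -/
def wt {n : ℕ} (x : Fin n → ZMod 2) : ℕ := (Finset.univ.filter fun i => x i ≠ 0).card

/-- The `F₂`-linear combination `uᵀX` of the rows of `X`. -/
def rowComb {ℓ n : ℕ} (u : Fin ℓ → ZMod 2) (X : Fin ℓ → Fin n → ZMod 2) :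
    Fin n → ZMod 2 :=
  fun j => ∑ i, u i * X i j

/-- `φ^Lin_v(X) = ∑_{u : ⟨u,v⟩ = 1} [(n+d-2|uᵀX|)^m - (n-d)^m]`. -/
noncomputable def phiLin (n d m : ℕ) {ℓ : ℕ} (v : Fin ℓ → ZMod 2)
    (X : Fin ℓ → Fin n → ZMod 2) : ℝ :=
  ∑ u ∈ Finset.univ.filter (fun u : Fin ℓ → ZMod 2 => (∑ i, u i * v i) = 1),
    (((n:ℝ) + d - 2 * wt (rowComb u X))^m - ((n:ℝ) - d)^m)

/-- `Φ^Lin = ∏_{0 ≠ v} φ^Lin_v`. -/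
noncomputable def PhiLin (n d m : ℕ) {ℓ : ℕ} (X : Fin ℓ → Fin n → ZMod 2) : ℝ :=
  ∏ v ∈ Finset.univ.filter (fun v : Fin ℓ → ZMod 2 => v ≠ 0), phiLin n d m v X

lemma zmod2_ne_zero {a : ZMod 2} (h : a ≠ 0) : a = 1 := by revert h; revert a; decide

lemma wt_zero' {n : ℕ} : wt (0 : Fin n → ZMod 2) = 0 := by simp [wt]

lemma wt_le {n : ℕ} (x : Fin n → ZMod 2) : wt x ≤ n := by
  have := Finset.card_filter_le (Finset.univ : Finset (Fin n)) (fun i => x i ≠ 0)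
  simpa [wt] using this

lemma term_nonpos {n d m : ℕ} (hm : Even m) (w : ℕ) (hdw : d ≤ w) (hwn : w ≤ n) :
    ((n:ℝ) + d - 2 * w)^m - ((n:ℝ) - d)^m ≤ 0 := by
  have h1 : (d:ℝ) ≤ w := by exact_mod_cast hdw
  have h2 : (w:ℝ) ≤ n := by exact_mod_cast hwn
  have habs : |(n:ℝ) + d - 2 * w| ≤ (n:ℝ) - d := abs_le.mpr ⟨by linarith, by linarith⟩
  have h3 : ((n:ℝ) + d - 2 * w)^m ≤ ((n:ℝ) - d)^m := by
    calc ((n:ℝ) + d - 2 * w)^m = |(n:ℝ) + d - 2 * w|^m := (hm.pow_abs _).symm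
    _ ≤ ((n:ℝ) - d)^m := pow_le_pow_left₀ (abs_nonneg _) habs m
  linarith

lemma single_dot {ℓ : ℕ} (i₀ : Fin ℓ) (v : Fin ℓ → ZMod 2) :
    ∑ i, Pi.single (M := fun _ => ZMod 2) i₀ 1 i * v i = v i₀ := by
  rw [Finset.sum_eq_single i₀]
  · simp
  · intro b _ hb; rw [Pi.single_eq_of_ne hb, zero_mul]
  · simp

lemma card_dot_one {ℓ : ℕ} (v : Fin ℓ → ZMod 2) (hv : v ≠ 0) :
    (Finset.univ.filter fun u : Fin ℓ → ZMod 2 => (∑ i, u i * v i) = 1).card = 2^(ℓ-1) := by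
  obtain ⟨i₀, hi₀⟩ := Function.ne_iff.mp hv
  have hl : 1 ≤ ℓ := i₀.pos
  have hpow : 2 * 2^(ℓ-1) = 2^ℓ := by
    rw [← pow_succ']
    congr 1
    omega
  have hvi : v i₀ = 1 := zmod2_ne_zero (by simpa using hi₀)
  have h11 : ∀ a : ZMod 2, a + 1 + 1 = a := by decide
  have hdotadd : ∀ u : Fin ℓ → ZMod 2,
      (∑ i, (u + Pi.single i₀ 1 : Fin ℓ → ZMod 2) i * v i) = (∑ i, u i * v i) + 1 := by
    intro u
    simp only [Pi.add_apply, add_mul, Finset.sum_add_distrib]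
    rw [single_dot, hvi]
  have hflip : ∀ a : ZMod 2, a = 1 → ¬ (a + 1 = 1) := by decide
  have hflip' : ∀ a : ZMod 2, ¬ a = 1 → a + 1 = 1 := by decide
  have hbij : (Finset.univ.filter fun u : Fin ℓ → ZMod 2 => (∑ i, u i * v i) = 1).card
      = (Finset.univ.filter fun u : Fin ℓ → ZMod 2 => ¬((∑ i, u i * v i) = 1)).card := by
    apply Finset.card_nbij' (fun u => u + Pi.single i₀ 1) (fun u => u + Pi.single i₀ 1)
    · intro u hu
      simp only [Finset.mem_coe, Finset.mem_filter, Finset.mem_univ, true_and] at hu ⊢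
      rw [hdotadd]
      exact hflip _ hu
    · intro u hu
      simp only [Finset.mem_coe, Finset.mem_filter, Finset.mem_univ, true_and] at hu ⊢
      rw [hdotadd]
      exact hflip' _ hu
    · intro u _
      funext i
      simp only [Pi.add_apply, Pi.single_apply]
      split
      · exact h11 _
      · simp
    · intro u _
      funext i
      simp only [Pi.add_apply, Pi.single_apply]
      split
      · exact h11 _
      · simp
  have hpart := Finset.card_filter_add_card_filter_not
    (s := (Finset.univ : Finset (Fin ℓ → ZMod 2)))
    (fun u : Fin ℓ → ZMod 2 => (∑ i, u i * v i) = 1)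
  have hcard : (Finset.univ : Finset (Fin ℓ → ZMod 2)).card = 2^ℓ := by
    simp [Finset.card_univ]
  refine Nat.eq_of_mul_eq_mul_left (show 0 < 2 by norm_num) ?_
  calc 2 * (Finset.univ.filter fun u : Fin ℓ → ZMod 2 => (∑ i, u i * v i) = 1).card
      = (Finset.univ.filter fun u : Fin ℓ → ZMod 2 => (∑ i, u i * v i) = 1).card
        + (Finset.univ.filter fun u : Fin ℓ → ZMod 2 => (∑ i, u i * v i) = 1).card := two_mul _
    _ = (Finset.univ.filter fun u : Fin ℓ → ZMod 2 => (∑ i, u i * v i) = 1).card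
        + (Finset.univ.filter fun u : Fin ℓ → ZMod 2 => ¬((∑ i, u i * v i) = 1)).card := by
        rw [hbij]
    _ = (Finset.univ : Finset (Fin ℓ → ZMod 2)).card := hpart
    _ = 2^ℓ := hcard
    _ = 2 * 2^(ℓ-1) := hpow.symm

lemma prod_nonpos_of_odd {α : Type*} (s : Finset α) (f : α → ℝ)
    (h : ∀ i ∈ s, f i ≤ 0) (ho : Odd s.card) : ∏ i ∈ s, f i ≤ 0 := by
  have h1 : ∏ i ∈ s, (-f i) = (-1 : ℝ)^s.card * ∏ i ∈ s, f i := by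
    rw [← Finset.prod_const, ← Finset.prod_mul_distrib]
    simp
  have h2 : 0 ≤ ∏ i ∈ s, (-f i) := Finset.prod_nonneg fun i hi => neg_nonneg.mpr (h i hi)
  rw [h1, ho.neg_one_pow] at h2
  linarith

/-- `Φ^Lin` is nonpositive on nonzero configurations all of whose nonzero row-span
vectors have weight at least `d`, and `Φ^Lin(0) > 0`. -/
theorem PhiLin_sign (n d ℓ m : ℕ) (hm : Even m) (hm0 : 0 < m)
    (hd : 0 < d) (hdn : d < n)
    (hℓm : (2:ℝ)^(ℓ-1) ≤ ((1 + (d:ℝ)/n) / (1 - (d:ℝ)/n))^m)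
    (X : Fin ℓ → Fin n → ZMod 2) :
    (X ≠ 0 → (∀ u : Fin ℓ → ZMod 2, rowComb u X = 0 ∨ d ≤ wt (rowComb u X)) →
      PhiLin n d m X ≤ 0) ∧
    0 < PhiLin n d m (0 : Fin ℓ → Fin n → ZMod 2) := by
  classical
  have hn0 : (0:ℝ) < n := by exact_mod_cast hd.trans hdn
  have hdr : (0:ℝ) < d := by exact_mod_cast hd
  have hdnr : (d:ℝ) < n := by exact_mod_cast hdn
  have hndpos : (0:ℝ) < (n:ℝ) - d := by linarith
  have hkey : (2:ℝ)^(ℓ-1) * ((n:ℝ)-d)^m ≤ ((n:ℝ)+d)^m := by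
    have h1 : ((1 + (d:ℝ)/n) / (1 - (d:ℝ)/n)) = ((n:ℝ)+d)/((n:ℝ)-d) := by
      field_simp
    rw [h1, div_pow] at hℓm
    rw [← le_div_iff₀ (pow_pos hndpos m)]
    exact hℓm
  have cpos : (0:ℝ) < ((n:ℝ)+d)^m - ((n:ℝ)-d)^m := by
    have := pow_lt_pow_left₀ (show (n:ℝ)-d < (n:ℝ)+d by linarith) (le_of_lt hndpos) hm0.ne'
    linarith
  constructor
  · -- main nonpositivity
    intro hX hwt
    -- nonzero element of the "orthogonal complement"
    have hex : ∃ i j, X i j ≠ 0 := by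
      by_contra h
      push_neg at h
      exact hX (funext fun i => funext fun j => h i j)
    obtain ⟨i₀, j₀, hij⟩ := hex
    set v₀ : Fin ℓ → ZMod 2 := fun i => X i j₀ with hv₀def
    have hv₀ : v₀ ≠ 0 := fun h => hij (by simpa using congrFun h i₀)
    let H : AddSubgroup (Fin ℓ → ZMod 2) :=
      { carrier := {v | ∀ u, rowComb u X = 0 → (∑ i, u i * v i) = 0}
        zero_mem' := by intro u _; simp
        add_mem' := by
          intro a b ha hb u hu
          simp only [Pi.add_apply, mul_add, Finset.sum_add_distrib, ha u hu, hb u hu, add_zero]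
        neg_mem' := by
          intro a ha u hu
          simp only [Pi.neg_apply, mul_neg, Finset.sum_neg_distrib, ha u hu, neg_zero] }
    have hv₀H : v₀ ∈ H := by
      intro u hu
      have := congrFun hu j₀
      simpa [rowComb, hv₀def] using this
    haveI : Fact (Nat.Prime 2) := ⟨by norm_num⟩
    have h2x : (2 : ℕ) • (⟨v₀, hv₀H⟩ : H) = 0 := by
      refine Subtype.ext ?_
      show (2 : ℕ) • v₀ = 0
      funext i
      simp [two_smul, CharTwo.add_self_eq_zero]
    have hnex : (⟨v₀, hv₀H⟩ : H) ≠ 0 := by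
      intro h
      exact hv₀ (congrArg Subtype.val h)
    have horder : addOrderOf (⟨v₀, hv₀H⟩ : H) = 2 := addOrderOf_eq_prime h2x hnex
    have hdvd : 2 ∣ Fintype.card H := by
      have := addOrderOf_dvd_card (x := (⟨v₀, hv₀H⟩ : H))
      rwa [horder] at this
    have hcardH : Fintype.card H = (Finset.univ.filter fun v : Fin ℓ → ZMod 2 => v ∈ H).card :=
      Fintype.card_of_subtype _ (by simp)
    -- splitting the product
    set S : Finset (Fin ℓ → ZMod 2) := Finset.univ.filter (fun v : Fin ℓ → ZMod 2 => v ≠ 0)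
      with hSdef
    have hsplit : PhiLin n d m X =
        (∏ v ∈ S.filter (fun v => v ∈ H), phiLin n d m v X) *
        (∏ v ∈ S.filter (fun v => ¬ v ∈ H), phiLin n d m v X) := by
      rw [PhiLin, ← Finset.prod_filter_mul_prod_filter_not S (fun v => v ∈ H)]
    -- odd cardinality
    have hT : S.filter (fun v => v ∈ H) =
        (Finset.univ.filter fun v : Fin ℓ → ZMod 2 => v ∈ H).erase 0 := by
      ext v
      simp only [hSdef, Finset.mem_filter, Finset.filter_filter, Finset.mem_erase,
        Finset.mem_univ, true_and, Finset.mem_filter]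
      try tauto
    have h0H : (0 : Fin ℓ → ZMod 2) ∈ Finset.univ.filter fun v : Fin ℓ → ZMod 2 => v ∈ H := by
      simp [H.zero_mem]
    have hoddT : Odd (S.filter (fun v => v ∈ H)).card := by
      rw [hT, Finset.card_erase_of_mem h0H]
      refine Nat.Even.sub_odd ?_ ?_ odd_one
      · exact Finset.card_pos.mpr ⟨0, h0H⟩
      · rw [← hcardH]
        exact even_iff_two_dvd.mpr hdvd
    -- factors over H are nonpositive
    have hneg : ∀ v ∈ S.filter (fun v => v ∈ H), phiLin n d m v X ≤ 0 := by
      intro v hv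
      obtain ⟨hvS, hvH⟩ := Finset.mem_filter.mp hv
      rw [phiLin]
      apply Finset.sum_nonpos
      intro u hu
      have hu1 : (∑ i, u i * v i) = 1 := (Finset.mem_filter.mp hu).2
      have hrc : rowComb u X ≠ 0 := by
        intro h
        rw [hvH u h] at hu1
        exact zero_ne_one hu1
      have hdw : d ≤ wt (rowComb u X) := (hwt u).resolve_left hrc
      exact term_nonpos hm _ hdw (wt_le _)
    -- factors outside H are nonnegative
    have hpos : ∀ v ∈ S.filter (fun v => ¬ v ∈ H), 0 ≤ phiLin n d m v X := by
      intro v hv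
      obtain ⟨hvS, hvH⟩ := Finset.mem_filter.mp hv
      have hv0 : v ≠ 0 := by
        simpa [hSdef] using hvS
      simp only [H, AddSubgroup.mem_mk, AddSubmonoid.mem_mk, AddSubsemigroup.mem_mk, Set.mem_setOf_eq] at hvH
      push_neg at hvH
      obtain ⟨u₀, hu₀X, hu₀v⟩ := hvH
      have hu₀v1 : (∑ i, u₀ i * v i) = 1 := zmod2_ne_zero hu₀v
      set A : Finset (Fin ℓ → ZMod 2) :=
        Finset.univ.filter (fun u : Fin ℓ → ZMod 2 => (∑ i, u i * v i) = 1) with hAdef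
      have hu₀A : u₀ ∈ A := by simp [hAdef, hu₀v1]
      have hAcard : A.card = 2^(ℓ-1) := card_dot_one v hv0
      have hterm0 : ((n:ℝ) + d - 2 * wt (rowComb u₀ X))^m - ((n:ℝ)-d)^m
          = ((n:ℝ)+d)^m - ((n:ℝ)-d)^m := by
        rw [hu₀X, wt_zero']
        norm_num
      have hsum : phiLin n d m v X =
          (((n:ℝ) + d - 2 * wt (rowComb u₀ X))^m - ((n:ℝ)-d)^m) +
          ∑ u ∈ A.erase u₀, (((n:ℝ) + d - 2 * wt (rowComb u X))^m - ((n:ℝ)-d)^m) := by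
        rw [phiLin, ← hAdef, ← Finset.add_sum_erase _ _ hu₀A]
      have hlb : ∀ u ∈ A.erase u₀,
          -(((n:ℝ)-d)^m) ≤ ((n:ℝ) + d - 2 * wt (rowComb u X))^m - ((n:ℝ)-d)^m := by
        intro u _
        have := hm.pow_nonneg ((n:ℝ) + d - 2 * wt (rowComb u X))
        linarith
      have hsum2 := Finset.card_nsmul_le_sum (A.erase u₀)
        (fun u => ((n:ℝ) + d - 2 * wt (rowComb u X))^m - ((n:ℝ)-d)^m)
        (-(((n:ℝ)-d)^m)) hlb
      have hce : (A.erase u₀).card = 2^(ℓ-1) - 1 := by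
        rw [Finset.card_erase_of_mem hu₀A, hAcard]
      have hone : 1 ≤ 2^(ℓ-1) := Nat.one_le_two_pow
      have hcast : ((A.erase u₀).card : ℝ) = (2:ℝ)^(ℓ-1) - 1 := by
        rw [hce]
        push_cast [Nat.cast_sub hone]
        ring
      rw [nsmul_eq_mul, hcast] at hsum2
      rw [hsum, hterm0]
      nlinarith [hm.pow_nonneg ((n:ℝ)-d)]
    rw [hsplit]
    exact mul_nonpos_iff.mpr (Or.inr ⟨prod_nonpos_of_odd _ _ hneg hoddT,
      Finset.prod_nonneg hpos⟩)
  · -- positivity at 0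
    rw [PhiLin]
    apply Finset.prod_pos
    intro v hv
    have hv0 : v ≠ 0 := by simpa using (Finset.mem_filter.mp hv).2
    rw [phiLin]
    apply Finset.sum_pos
    · intro u _
      have hrc : rowComb u (0 : Fin ℓ → Fin n → ZMod 2) = 0 := by
        funext j; simp [rowComb]
      rw [hrc, wt_zero']
      simp only [Nat.cast_zero, mul_zero, sub_zero]
      exact cpos
    · obtain ⟨i₀, hi₀⟩ := Function.ne_iff.mp hv0
      refine ⟨Pi.single i₀ 1, Finset.mem_filter.mpr ⟨Finset.mem_univ _, ?_⟩⟩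
      rw [single_dot]
      exact zmod2_ne_zero (by simpa using hi₀)
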